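/- Let X = (X_1,...,X_n) and Y = (Y_1,...,Y_n) be vectors of independent Bernoulli random variables with success probabilities p_i and q_i respectively, 0 < p_i ≤ q_i < 1. If all the quantities β_i = (p_i/(1-p_i))·((1-q_i)/q_i) are equal, then for every k ∈ {0,...,n}, the conditional law of X given ∑X_i ≥ k is stochastically dominated by the conditional law of Y given ∑Y_i ≥ k. -/

import Mathlib

/-!
Put `w i = q i / (1 - q i)`. The hypothesis says `p i / (1 - p i) = β * w i` for one `β ≤ 1`, so
the law of `X` is proportional to `β ^ |x| * ∏_{x i} w i` and that of `Y` to `∏_{x i} w i`. Both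
conditional laws are therefore mixtures, over the levels `m ≥ k`, of the same level laws (the
normalised restrictions of `∏_{x i} w i` to `{|x| = m}`), with weights proportional to
`β ^ m * e_m (w)` and `e_m (w)` respectively.

The level laws increase stochastically with `m`: by induction on `n`, splitting off the first
coordinate, a coupling of level `m` below level `m + 1` is glued from couplings on the remaining
coordinates, and the mass moved up is nonnegative by the log-concavity
`e_(m-1) e_(m+1) ≤ e_m ^ 2` of elementary symmetric polynomials. As `β ^ m` is nonincreasing, the
level weights of `X` are dominated by those of `Y` (monotone likelihood ratio); coupling the
weights by quantiles and the level laws pairwise gives the coupling of the two conditional laws.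
-/

open Finset
open scoped BigOperators Classical

noncomputable section

/-- Weight (probability) of a configuration `x` of `n` independent Bernoulli
variables with success probabilities `p i`. -/
def bw {n : ℕ} (p : Fin n → ℝ) (x : Fin n → Bool) : ℝ :=
  ∏ i, if x i then p i else 1 - p i

/-- Probability of the event `A` for `n` independent Bernoulli variables. -/
def bpr {n : ℕ} (p : Fin n → ℝ) (A : (Fin n → Bool) → Prop) : ℝ :=
  ∑ x : Fin n → Bool, if A x then bw p x else 0

/-- Number of successes in the configuration `x`. -/
def cnt {n : ℕ} (x : Fin n → Bool) : ℕ := ∑ i, if x i then 1 else 0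

/-- Conditional probability mass function given the event `A`. -/
def condPMF {n : ℕ} (p : Fin n → ℝ) (A : (Fin n → Bool) → Prop)
    (x : Fin n → Bool) : ℝ :=
  (if A x then bw p x else 0) / bpr p A

/-- `dominates μ ν` : the law `μ` on `{0,1}^n` is stochastically dominated by `ν`,
i.e. there is a coupling supported on ordered pairs. -/
def dominates {n : ℕ} (μ ν : (Fin n → Bool) → ℝ) : Prop :=
  ∃ c : (Fin n → Bool) → (Fin n → Bool) → ℝ,
    (∀ x y, 0 ≤ c x y) ∧
    (∀ x, ∑ y : Fin n → Bool, c x y = μ x) ∧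
    (∀ y, ∑ x : Fin n → Bool, c x y = ν y) ∧
    (∀ x y, c x y ≠ 0 → x ≤ y)

section Coupling

variable {α : Type*} [Fintype α] [Preorder α]

structure IsMonotoneCoupling (μ ν : α → ℝ) (c : α → α → ℝ) : Prop where
  nonneg : ∀ x y, 0 ≤ c x y
  sum_right : ∀ x, ∑ y, c x y = μ x
  sum_left : ∀ y, ∑ x, c x y = ν y
  le_of_ne_zero : ∀ x y, c x y ≠ 0 → x ≤ y

def StochLE (μ ν : α → ℝ) : Prop := ∃ c, IsMonotoneCoupling μ ν c

namespace IsMonotoneCoupling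

variable {μ ν : α → ℝ} {c : α → α → ℝ}

lemma eq_zero_of_left_eq_zero (hc : IsMonotoneCoupling μ ν c) {x : α} (hx : μ x = 0) (y : α) :
    c x y = 0 :=
  (sum_eq_zero_iff_of_nonneg fun y _ => hc.nonneg x y).1 (by rw [hc.sum_right, hx]) y
    (mem_univ y)

lemma eq_zero_of_right_eq_zero (hc : IsMonotoneCoupling μ ν c) (x : α) {y : α} (hy : ν y = 0) :
    c x y = 0 :=
  (sum_eq_zero_iff_of_nonneg fun x _ => hc.nonneg x y).1 (by rw [hc.sum_left, hy]) x
    (mem_univ x)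

lemma mixture {ι : Type*} [Fintype ι] [Preorder ι] {a b : ι → ℝ} {μ : ι → α → ℝ}
    {d : ι → ι → ℝ} {C : ι → ι → α → α → ℝ} (hd : IsMonotoneCoupling a b d)
    (hC : ∀ i j, d i j = 0 ∨ IsMonotoneCoupling (μ i) (μ j) (C i j)) :
    IsMonotoneCoupling (fun x => ∑ i, a i * μ i x) (fun y => ∑ j, b j * μ j y)
      (fun x y => ∑ i, ∑ j, d i j * C i j x y) where
  nonneg x y := sum_nonneg fun i _ => sum_nonneg fun j _ => by
    rcases hC i j with h | h
    · simp [h]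
    · exact mul_nonneg (hd.nonneg i j) (h.nonneg x y)
  sum_right x := by
    have hrow : ∀ i j, d i j * ∑ y, C i j x y = d i j * μ i x := fun i j => by
      rcases hC i j with h | h
      · simp [h]
      · rw [h.sum_right]
    calc ∑ y, ∑ i, ∑ j, d i j * C i j x y
        = ∑ i, ∑ j, d i j * ∑ y, C i j x y := by
          rw [sum_comm]
          refine sum_congr rfl fun i _ => ?_
          rw [sum_comm]
          simp_rw [mul_sum]
      _ = ∑ i, a i * μ i x := by
          simp_rw [hrow, ← sum_mul, hd.sum_right]
  sum_left y := by
    have hcol : ∀ i j, d i j * ∑ x, C i j x y = d i j * μ j y := fun i j => by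
      rcases hC i j with h | h
      · simp [h]
      · rw [h.sum_left]
    calc ∑ x, ∑ i, ∑ j, d i j * C i j x y
        = ∑ i, ∑ j, d i j * ∑ x, C i j x y := by
          rw [sum_comm]
          refine sum_congr rfl fun i _ => ?_
          rw [sum_comm]
          simp_rw [mul_sum]
      _ = ∑ j, ∑ i, d i j * ∑ x, C i j x y := sum_comm
      _ = ∑ j, b j * μ j y := by
          simp_rw [hcol, ← sum_mul, hd.sum_left]
  le_of_ne_zero x y h := by
    obtain ⟨i, -, hi⟩ := exists_ne_zero_of_sum_ne_zero h
    obtain ⟨j, -, hj⟩ := exists_ne_zero_of_sum_ne_zero hi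
    rcases hC i j with h | h
    · simp [h] at hj
    · exact h.le_of_ne_zero x y (right_ne_zero_of_mul hj)

end IsMonotoneCoupling

namespace StochLE

variable {μ ν ρ : α → ℝ}

lemma dominates {n : ℕ} {μ ν : (Fin n → Bool) → ℝ} (h : StochLE μ ν) : dominates μ ν :=
  let ⟨c, hc⟩ := h
  ⟨c, hc.nonneg, hc.sum_right, hc.sum_left, hc.le_of_ne_zero⟩

lemma nonneg_right (h : StochLE μ ν) (y : α) : 0 ≤ ν y := by
  obtain ⟨c, hc⟩ := h
  rw [← hc.sum_left y]
  exact sum_nonneg fun x _ => hc.nonneg x y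

lemma refl (hμ : ∀ x, 0 ≤ μ x) : StochLE μ μ := by
  refine ⟨fun x y => if x = y then μ x else 0, ⟨?_, ?_, ?_, ?_⟩⟩
  · intro x y
    split_ifs
    exacts [hμ x, le_rfl]
  · simp
  · simp
  · intro x y h
    split_ifs at h with hxy
    exacts [hxy ▸ le_rfl, absurd rfl h]

lemma zero : StochLE (fun _ : α => (0 : ℝ)) (fun _ => 0) :=
  refl fun _ => le_rfl

lemma const_mul (h : StochLE μ ν) {r : ℝ} (hr : 0 ≤ r) :
    StochLE (fun x => r * μ x) (fun y => r * ν y) := by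
  obtain ⟨c, hc⟩ := h
  refine ⟨fun x y => r * c x y, ⟨?_, ?_, ?_, ?_⟩⟩
  · exact fun x y => mul_nonneg hr (hc.nonneg x y)
  · simp [← mul_sum, hc.sum_right]
  · simp [← mul_sum, hc.sum_left]
  · exact fun x y h => hc.le_of_ne_zero x y (right_ne_zero_of_mul h)

lemma trans (h₁ : StochLE μ ν) (h₂ : StochLE ν ρ) : StochLE μ ρ := by
  obtain ⟨c₁, hc₁⟩ := h₁
  obtain ⟨c₂, hc₂⟩ := h₂
  have hν : ∀ y, 0 ≤ ν y := StochLE.nonneg_right ⟨c₁, hc₁⟩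
  -- Where `ν y = 0` the division gives `0`, which is right: `c₁` and `c₂` vanish there too.
  refine ⟨fun x z => ∑ y, c₁ x y * c₂ y z / ν y, ⟨?_, ?_, ?_, ?_⟩⟩
  · exact fun x z => sum_nonneg fun y _ =>
      div_nonneg (mul_nonneg (hc₁.nonneg x y) (hc₂.nonneg y z)) (hν y)
  · intro x
    rw [sum_comm, ← hc₁.sum_right x]
    refine sum_congr rfl fun y _ => ?_
    rw [← sum_div, ← mul_sum, hc₂.sum_right]
    rcases eq_or_ne (ν y) 0 with hy | hy
    · rw [hc₁.eq_zero_of_right_eq_zero x hy, zero_mul, zero_div]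
    · exact mul_div_cancel_right₀ _ hy
  · intro z
    rw [sum_comm, ← hc₂.sum_left z]
    refine sum_congr rfl fun y _ => ?_
    simp_rw [mul_div_right_comm _ (c₂ y z)]
    rw [← sum_mul, ← sum_div, hc₁.sum_left]
    rcases eq_or_ne (ν y) 0 with hy | hy
    · rw [hc₂.eq_zero_of_left_eq_zero hy z, mul_zero]
    · rw [div_self hy, one_mul]
  · intro x z h
    obtain ⟨y, -, hy⟩ := exists_ne_zero_of_sum_ne_zero h
    have hy' := left_ne_zero_of_mul (div_ne_zero_iff.1 hy).1
    have hy'' := right_ne_zero_of_mul (div_ne_zero_iff.1 hy).1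
    exact (hc₁.le_of_ne_zero x y hy').trans (hc₂.le_of_ne_zero y z hy'')

lemma mixture {ι : Type*} [Fintype ι] [Preorder ι] {a b : ι → ℝ} {μ : ι → α → ℝ}
    (hab : StochLE a b) (hμ : ∀ i j, i ≤ j → StochLE (μ i) (μ j)) :
    StochLE (fun x => ∑ i, a i * μ i x) (fun y => ∑ j, b j * μ j y) := by
  obtain ⟨d, hd⟩ := hab
  have hC : ∀ i j, ∃ C, d i j = 0 ∨ IsMonotoneCoupling (μ i) (μ j) C := by
    intro i j
    by_cases hij : d i j = 0
    · exact ⟨0, .inl hij⟩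
    · obtain ⟨C, hC⟩ := hμ i j (hd.le_of_ne_zero i j hij)
      exact ⟨C, .inr hC⟩
  choose C hC using hC
  exact ⟨_, hd.mixture hC⟩

end StochLE

end Coupling

lemma max_min_sub_max_min {lo hi x y : ℝ} (hlh : lo ≤ hi) (hxy : x ≤ y) :
    max lo (min hi y) - max lo (min hi x) = max 0 (min hi y - max lo x) := by
  simp only [max_def, min_def]
  split_ifs <;> linarith

lemma sum_range_overlap {B : ℕ → ℝ} (hB : Monotone B) {N : ℕ} {lo hi : ℝ} (hlh : lo ≤ hi)
    (h0 : B 0 ≤ lo) (hN : hi ≤ B N) :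
    ∑ j ∈ range N, max 0 (min hi (B (j + 1)) - max lo (B j)) = hi - lo := by
  rw [← sum_congr rfl fun j _ => max_min_sub_max_min hlh (hB j.le_succ),
    sum_range_sub (fun j => max lo (min hi (B j))), min_eq_left hN,
    min_eq_right (h0.trans hlh), max_eq_right hlh, max_eq_left h0]

/-- The quantile coupling: `d i j` is the length of `[A i, A (i+1)] ∩ [B j, B (j+1)]`, where `A`
and `B` are the partial sums of `a` and `b`. -/
lemma stochLE_of_sum_range_le {N : ℕ} {a b : ℕ → ℝ} (ha : ∀ i, 0 ≤ a i) (hb : ∀ j, 0 ≤ b j)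
    (htot : ∑ m ∈ range N, a m = ∑ m ∈ range N, b m)
    (hpart : ∀ t ≤ N, ∑ m ∈ range t, b m ≤ ∑ m ∈ range t, a m) :
    StochLE (fun i : Fin N => a i) (fun j : Fin N => b j) := by
  set A : ℕ → ℝ := fun t => ∑ m ∈ range t, a m
  set B : ℕ → ℝ := fun t => ∑ m ∈ range t, b m
  have hA : Monotone A := fun s t hst =>
    sum_le_sum_of_subset_of_nonneg (range_subset_range.2 hst) fun m _ _ => ha m
  have hB : Monotone B := fun s t hst =>
    sum_le_sum_of_subset_of_nonneg (range_subset_range.2 hst) fun m _ _ => hb m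
  have hAB : A N = B N := htot
  refine ⟨fun i j => max 0 (min (A (i + 1)) (B (j + 1)) - max (A i) (B j)), ⟨?_, ?_, ?_, ?_⟩⟩
  · exact fun i j => le_max_left _ _
  · intro i
    rw [Fin.sum_univ_eq_sum_range (fun j => max 0 (min (A (i + 1)) (B (j + 1)) - max (A i) (B j))),
      sum_range_overlap hB (hA i.val.le_succ) (by simpa [B] using sum_nonneg fun m _ => ha m)
        (hAB ▸ hA i.2)]
    exact sum_range_succ_sub_sum a
  · intro j
    simp_rw [min_comm (A _), max_comm (A _)]
    rw [Fin.sum_univ_eq_sum_range (fun i => max 0 (min (B (j + 1)) (A (i + 1)) - max (B j) (A i))),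
      sum_range_overlap hA (hB j.val.le_succ) (by simpa [A] using sum_nonneg fun m _ => hb m)
        (hAB ▸ hB j.2)]
    exact sum_range_succ_sub_sum b
  · intro i j h
    by_contra hij
    have hji : j.val + 1 ≤ i := Fin.lt_def.1 (not_le.1 hij)
    have hBA : B (j + 1) ≤ A i := (hpart _ (hji.trans i.2.le)).trans (hA hji)
    have h₁ := min_le_right (A (i + 1)) (B (j + 1))
    have h₂ := le_max_left (A i) (B j)
    exact h (max_eq_left (by linarith))

/-- The monotone likelihood ratio order implies the usual stochastic order. -/
lemma sum_range_le_of_mul_le {N t : ℕ} {a b : ℕ → ℝ} (ha : ∀ i, 0 ≤ a i) (hb : ∀ j, 0 ≤ b j)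
    (htot : ∑ m ∈ range N, a m = ∑ m ∈ range N, b m)
    (hab : ∀ m l, m ≤ l → a l * b m ≤ a m * b l) (ht : t ≤ N) :
    ∑ m ∈ range t, b m ≤ ∑ m ∈ range t, a m := by
  have hcross : (∑ m ∈ range t, b m) * ∑ l ∈ Ico t N, a l
      ≤ (∑ m ∈ range t, a m) * ∑ l ∈ Ico t N, b l := by
    rw [sum_mul_sum, sum_mul_sum]
    refine sum_le_sum fun m hm => sum_le_sum fun l hl => ?_
    have hml : m ≤ l := (mem_range.1 hm).le.trans (mem_Ico.1 hl).1
    linarith [hab m l hml]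
  rw [← sum_range_add_sum_Ico _ ht, ← sum_range_add_sum_Ico _ ht] at htot
  have hA' : 0 ≤ ∑ l ∈ Ico t N, a l := sum_nonneg fun l _ => ha l
  have hB' : 0 ≤ ∑ l ∈ Ico t N, b l := sum_nonneg fun l _ => hb l
  have hA : 0 ≤ ∑ m ∈ range t, a m := sum_nonneg fun m _ => ha m
  have hB : 0 ≤ ∑ m ∈ range t, b m := sum_nonneg fun m _ => hb m
  nlinarith

section Cube

variable {n : ℕ}

lemma sum_cube_succ (f : (Fin (n + 1) → Bool) → ℝ) :
    ∑ x, f x = ∑ x, f (Fin.cons true x) + ∑ x, f (Fin.cons false x) := by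
  rw [← (Fin.consEquiv fun _ => Bool).sum_comp, Fintype.sum_prod_type, Fintype.sum_bool]
  rfl

lemma exists_eq_cons (x : Fin (n + 1) → Bool) : ∃ b y, x = Fin.cons b y :=
  ⟨x 0, Fin.tail x, (Fin.cons_self_tail x).symm⟩

/-- The mass `σ` moves from the face `x 0 = false` straight up to the face `x 0 = true`. -/
lemma StochLE.cons {μ ν : (Fin (n + 1) → Bool) → ℝ} {ρ σ τ : (Fin n → Bool) → ℝ}
    (hσ : ∀ x, 0 ≤ σ x) (h₁ : StochLE (fun x => μ (Fin.cons true x)) τ)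
    (h₀ : StochLE ρ (fun y => ν (Fin.cons false y)))
    (hμ : ∀ x, μ (Fin.cons false x) = ρ x + σ x) (hν : ∀ y, ν (Fin.cons true y) = τ y + σ y) :
    StochLE μ ν := by
  obtain ⟨c₁, hc₁⟩ := h₁
  obtain ⟨c₀, hc₀⟩ := h₀
  let block : Bool → Bool → (Fin n → Bool) → (Fin n → Bool) → ℝ
    | true, true => c₁
    | false, false => c₀
    | false, true => fun x y => if x = y then σ x else 0
    | true, false => 0
  have hblock : ∀ b b' x y, 0 ≤ block b b' x y ∧ (block b b' x y ≠ 0 → b ≤ b' ∧ x ≤ y) := by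
    rintro (_ | _) (_ | _) x y
    · exact ⟨hc₀.nonneg x y, fun h => ⟨le_rfl, hc₀.le_of_ne_zero x y h⟩⟩
    · refine ⟨by dsimp only [block]; split_ifs <;> simp [hσ], fun h => ⟨by decide, ?_⟩⟩
      dsimp only [block] at h
      split_ifs at h with hxy
      exacts [hxy ▸ le_rfl, absurd rfl h]
    · exact ⟨le_rfl, fun h => absurd rfl h⟩
    · exact ⟨hc₁.nonneg x y, fun h => ⟨le_rfl, hc₁.le_of_ne_zero x y h⟩⟩
  refine ⟨fun x y => block (x 0) (y 0) (Fin.tail x) (Fin.tail y), ⟨?_, ?_, ?_, ?_⟩⟩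
  · exact fun x y => (hblock _ _ _ _).1
  · intro x
    obtain ⟨b, x, rfl⟩ := exists_eq_cons x
    rw [sum_cube_succ]
    cases b <;> simp [block, hc₁.sum_right, hc₀.sum_right, hμ, add_comm]
  · intro y
    obtain ⟨b, y, rfl⟩ := exists_eq_cons y
    rw [sum_cube_succ]
    cases b <;> simp [block, hc₁.sum_left, hc₀.sum_left, hν]
  · intro x y h
    obtain ⟨b, x, rfl⟩ := exists_eq_cons x
    obtain ⟨b', y, rfl⟩ := exists_eq_cons y
    simp only [Fin.cons_zero, Fin.tail_cons] at h
    exact Fin.cons_le_cons.2 ((hblock b b' x y).2 h)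

end Cube

section Levels

variable {n : ℕ}

def prodWeight (w : Fin n → ℝ) (x : Fin n → Bool) : ℝ := ∏ i, if x i then w i else 1

def levelWeight (w : Fin n → ℝ) (m : ℕ) (x : Fin n → Bool) : ℝ :=
  if cnt x = m then prodWeight w x else 0

/-- The elementary symmetric polynomial `e_m (w)`. -/
def levelMass (w : Fin n → ℝ) (m : ℕ) : ℝ := ∑ x, levelWeight w m x

def levelLaw (w : Fin n → ℝ) (m : ℕ) (x : Fin n → Bool) : ℝ := levelWeight w m x / levelMass w m

lemma cnt_le (x : Fin n → Bool) : cnt x ≤ n :=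
  (sum_le_sum fun i _ => show (if x i then 1 else 0) ≤ 1 by split <;> omega).trans_eq
    (by simp)

@[simp] lemma cnt_cons_true (x : Fin n → Bool) : cnt (Fin.cons true x : Fin (n + 1) → Bool) =
    cnt x + 1 := by
  rw [cnt, Fin.sum_univ_succ]
  simp only [Fin.cons_zero, Fin.cons_succ, if_true]
  exact add_comm _ _

@[simp] lemma cnt_cons_false (x : Fin n → Bool) :
    cnt (Fin.cons false x : Fin (n + 1) → Bool) = cnt x := by
  rw [cnt, Fin.sum_univ_succ]
  simp only [Fin.cons_zero, Fin.cons_succ, Bool.false_eq_true, if_false, zero_add]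
  rfl

@[simp] lemma prodWeight_cons_true (w : Fin (n + 1) → ℝ) (x : Fin n → Bool) :
    prodWeight w (Fin.cons true x) = w 0 * prodWeight (Fin.tail w) x := by
  simp [prodWeight, Fin.prod_univ_succ, Fin.tail]

@[simp] lemma prodWeight_cons_false (w : Fin (n + 1) → ℝ) (x : Fin n → Bool) :
    prodWeight w (Fin.cons false x) = prodWeight (Fin.tail w) x := by
  simp [prodWeight, Fin.prod_univ_succ, Fin.tail]

lemma prodWeight_pos {w : Fin n → ℝ} (hw : ∀ i, 0 < w i) (x : Fin n → Bool) :
    0 < prodWeight w x :=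
  prod_pos fun i _ => by split <;> simp [hw i]

lemma levelWeight_nonneg {w : Fin n → ℝ} (hw : ∀ i, 0 < w i) (m : ℕ) (x : Fin n → Bool) :
    0 ≤ levelWeight w m x := by
  unfold levelWeight
  split
  exacts [(prodWeight_pos hw x).le, le_rfl]

lemma levelWeight_of_lt (w : Fin n → ℝ) {m : ℕ} (hm : n < m) (x : Fin n → Bool) :
    levelWeight w m x = 0 :=
  if_neg ((cnt_le x).trans_lt hm).ne

@[simp] lemma levelWeight_zero_cons_true (w : Fin (n + 1) → ℝ) (x : Fin n → Bool) :
    levelWeight w 0 (Fin.cons true x) = 0 := by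
  simp [levelWeight]

@[simp] lemma levelWeight_succ_cons_true (w : Fin (n + 1) → ℝ) (m : ℕ) (x : Fin n → Bool) :
    levelWeight w (m + 1) (Fin.cons true x) = w 0 * levelWeight (Fin.tail w) m x := by
  simp only [levelWeight, cnt_cons_true, prodWeight_cons_true, add_left_inj, mul_ite, mul_zero]

@[simp] lemma levelWeight_cons_false (w : Fin (n + 1) → ℝ) (m : ℕ) (x : Fin n → Bool) :
    levelWeight w m (Fin.cons false x) = levelWeight (Fin.tail w) m x := by
  simp [levelWeight]

lemma levelMass_nonneg {w : Fin n → ℝ} (hw : ∀ i, 0 < w i) (m : ℕ) : 0 ≤ levelMass w m :=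
  sum_nonneg fun x _ => levelWeight_nonneg hw m x

lemma levelMass_of_lt (w : Fin n → ℝ) {m : ℕ} (hm : n < m) : levelMass w m = 0 :=
  sum_eq_zero fun x _ => levelWeight_of_lt w hm x

lemma levelMass_zero_succ (w : Fin (n + 1) → ℝ) :
    levelMass w 0 = levelMass (Fin.tail w) 0 := by
  simp [levelMass, sum_cube_succ]

lemma levelMass_succ_succ (w : Fin (n + 1) → ℝ) (m : ℕ) :
    levelMass w (m + 1) = levelMass (Fin.tail w) (m + 1) + w 0 * levelMass (Fin.tail w) m := by
  simp [levelMass, sum_cube_succ, mul_sum, add_comm]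

lemma levelMass_pos {w : Fin n → ℝ} (hw : ∀ i, 0 < w i) {m : ℕ} (hm : m ≤ n) :
    0 < levelMass w m := by
  induction n generalizing m with
  | zero => simp_all [levelMass, levelWeight, prodWeight, cnt]
  | succ n ih =>
    have hw' : ∀ i, 0 < Fin.tail w i := fun i => hw i.succ
    cases m with
    | zero => simpa [levelMass_zero_succ] using ih hw' n.zero_le
    | succ m =>
      rw [levelMass_succ_succ]
      exact add_pos_of_nonneg_of_pos (levelMass_nonneg hw' _)
        (mul_pos (hw 0) (ih hw' (by omega)))

end Levels

section LevelCoupling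

variable {n : ℕ}

lemma levelMass_mul_le_sq {w : Fin n → ℝ} (hw : ∀ i, 0 < w i) (m : ℕ) :
    levelMass w m * levelMass w (m + 2) ≤ levelMass w (m + 1) ^ 2 := by
  induction n generalizing m with
  | zero => simp [levelMass_of_lt w (m.succ_pos.trans (m + 1).lt_succ_self), sq_nonneg]
  | succ n ih =>
    have hw' : ∀ i, 0 < Fin.tail w i := fun i => hw i.succ
    set A := levelMass (Fin.tail w)
    have hA : ∀ j, 0 ≤ A j := levelMass_nonneg hw'
    have hu := hw 0
    have two_step : ∀ j, A j * A (j + 3) ≤ A (j + 1) * A (j + 2) := by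
      intro j
      by_cases hj : n < j + 3
      · rw [show A (j + 3) = 0 from levelMass_of_lt _ hj, mul_zero]
        exact mul_nonneg (hA _) (hA _)
      · have hpos : 0 < A (j + 1) * A (j + 2) :=
          mul_pos (levelMass_pos hw' (by omega)) (levelMass_pos hw' (by omega))
        refine le_of_mul_le_mul_right ?_ hpos
        nlinarith [mul_le_mul (ih hw' j) (ih hw' (j + 1)) (mul_nonneg (hA _) (hA _))
          (sq_nonneg _)]
    cases m with
    | zero =>
      rw [levelMass_zero_succ, levelMass_succ_succ, levelMass_succ_succ]
      nlinarith [ih hw' 0, mul_nonneg (mul_nonneg hu.le (hA 0)) (hA 1),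
        mul_nonneg (mul_nonneg hu.le hu.le) (mul_nonneg (hA 0) (hA 0))]
    | succ m =>
      rw [levelMass_succ_succ, levelMass_succ_succ, levelMass_succ_succ]
      nlinarith [ih hw' (m + 1), mul_le_mul_of_nonneg_left (two_step m) hu.le,
        mul_le_mul_of_nonneg_left (ih hw' m) (mul_nonneg hu.le hu.le)]

lemma levelMass_mul_levelMass_tail_le {w : Fin (n + 1) → ℝ} (hw : ∀ i, 0 < w i) (m : ℕ) :
    levelMass w m * levelMass (Fin.tail w) (m + 1)
      ≤ levelMass w (m + 1) * levelMass (Fin.tail w) m := by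
  have hw' : ∀ i, 0 < Fin.tail w i := fun i => hw i.succ
  have hA := levelMass_nonneg hw'
  cases m with
  | zero =>
    rw [levelMass_zero_succ, levelMass_succ_succ]
    nlinarith [mul_nonneg (hw 0).le (mul_nonneg (hA 0) (hA 0))]
  | succ m =>
    rw [levelMass_succ_succ, levelMass_succ_succ]
    nlinarith [mul_le_mul_of_nonneg_left (levelMass_mul_le_sq hw' m) (hw 0).le]

lemma stochLE_levelWeight_of_lt (w : Fin n → ℝ) {m : ℕ} (hm : n < m + 1) :
    StochLE (fun x => levelMass w (m + 1) * levelWeight w m x)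
      (fun y => levelMass w m * levelWeight w (m + 1) y) := by
  simpa [levelMass_of_lt w hm, levelWeight_of_lt w hm] using StochLE.zero

/-- `StochLE.cons` glues the couplings of levels `m - 1 ≤ m` and `m ≤ m + 1` on the remaining
coordinates; the mass it moves up is nonnegative by `levelMass_mul_levelMass_tail_le`. -/
lemma stochLE_levelWeight_succ_of_tail {w : Fin (n + 1) → ℝ} (hw : ∀ i, 0 < w i) {m : ℕ}
    (hm : m ≤ n) (ih : ∀ j, StochLE
      (fun x => levelMass (Fin.tail w) (j + 1) * levelWeight (Fin.tail w) j x)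
      (fun y => levelMass (Fin.tail w) j * levelWeight (Fin.tail w) (j + 1) y)) :
    StochLE (fun x => levelMass w (m + 1) * levelWeight w m x)
      (fun y => levelMass w m * levelWeight w (m + 1) y) := by
  have hw' : ∀ i, 0 < Fin.tail w i := fun i => hw i.succ
  set E := levelMass w
  set A := levelMass (Fin.tail w)
  set L := levelWeight (Fin.tail w)
  have hE : ∀ j, E (j + 1) = A (j + 1) + w 0 * A j := levelMass_succ_succ w
  have hL₁ : ∀ j x, levelWeight w (j + 1) (Fin.cons true x) = w 0 * L j x :=
    levelWeight_succ_cons_true w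
  have hL₀ : ∀ j x, levelWeight w j (Fin.cons false x) = L j x := levelWeight_cons_false w
  have hAm : A m ≠ 0 := (levelMass_pos hw' hm).ne'
  set s := E (m + 1) - E m * A (m + 1) / A m with hs_def
  have hs : 0 ≤ s := by
    rw [sub_nonneg, div_le_iff₀ (levelMass_pos hw' hm)]
    exact levelMass_mul_levelMass_tail_le hw m
  refine StochLE.cons (ρ := fun x => E m / A m * (A (m + 1) * L m x))
    (σ := fun x => s * L m x) (τ := fun y => E m * (w 0 * L m y) - s * L m y)
    (fun x => mul_nonneg hs (levelWeight_nonneg hw' m x)) ?_ ?_ ?_ ?_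
  · cases m with
    | zero =>
      have hτ : (fun y => E 0 * (w 0 * L 0 y) - s * L 0 y) = fun _ => 0 := by
        funext y
        rw [hs_def, hE, show E 0 = A 0 from levelMass_zero_succ w]
        field_simp
        ring
      simpa [hτ] using StochLE.zero
    | succ j =>
      have hr : 0 ≤ w 0 * E (j + 2) / A (j + 1) :=
        div_nonneg (mul_nonneg (hw 0).le (levelMass_nonneg hw _)) (levelMass_nonneg hw' _)
      convert (ih j).const_mul hr using 1
      · funext x
        rw [hL₁]
        field_simp
      · funext y
        rw [hs_def, hE (j + 1), hE j]
        field_simp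
        ring
  · have hr : 0 ≤ E m / A m := div_nonneg (levelMass_nonneg hw m) (levelMass_nonneg hw' m)
    convert (ih m).const_mul hr using 1
    funext y
    rw [hL₀]
    field_simp
  · intro x
    rw [hL₀, hs_def]
    field_simp
    ring
  · intro y
    rw [hL₁]
    ring

lemma stochLE_levelWeight_succ {w : Fin n → ℝ} (hw : ∀ i, 0 < w i) (m : ℕ) :
    StochLE (fun x => levelMass w (m + 1) * levelWeight w m x)
      (fun y => levelMass w m * levelWeight w (m + 1) y) := by
  induction n generalizing m with
  | zero => exact stochLE_levelWeight_of_lt w m.succ_pos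
  | succ n ih =>
    rcases lt_or_ge n m with hmn | hmn
    · exact stochLE_levelWeight_of_lt w (by omega)
    · exact stochLE_levelWeight_succ_of_tail hw hmn (ih fun i => hw i.succ)

end LevelCoupling

section Mixture

variable {n : ℕ}

lemma levelLaw_nonneg {w : Fin n → ℝ} (hw : ∀ i, 0 < w i) (m : ℕ) (x : Fin n → Bool) :
    0 ≤ levelLaw w m x :=
  div_nonneg (levelWeight_nonneg hw m x) (levelMass_nonneg hw m)

lemma stochLE_levelLaw {w : Fin n → ℝ} (hw : ∀ i, 0 < w i) {i j : ℕ} (hij : i ≤ j)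
    (hj : j ≤ n) : StochLE (levelLaw w i) (levelLaw w j) := by
  induction j, hij using Nat.le_induction with
  | base => exact StochLE.refl (levelLaw_nonneg hw i)
  | succ j hij ih =>
    have hEj := (levelMass_pos hw (w := w) (m := j) (by omega)).ne'
    have hEj' := (levelMass_pos hw hj).ne'
    refine (ih (by omega)).trans ?_
    convert (stochLE_levelWeight_succ hw j).const_mul
      (inv_nonneg.2 (mul_nonneg (levelMass_nonneg hw j) (levelMass_nonneg hw (j + 1)))) using 1
      <;> funext x <;> simp only [levelLaw] <;> field_simp

lemma sum_levelLaw_mul {w : Fin n → ℝ} (hw : ∀ i, 0 < w i) (g : ℕ → ℝ) (x : Fin n → Bool) :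
    ∑ m : Fin (n + 1), g m * levelMass w m * levelLaw w m x = g (cnt x) * prodWeight w x := by
  rw [sum_eq_single ⟨cnt x, Nat.lt_succ_of_le (cnt_le x)⟩]
  · have := (levelMass_pos hw (cnt_le x)).ne'
    simp only [levelLaw, levelWeight, if_true]
    field_simp
  · intro m _ hm
    have : cnt x ≠ m := fun h => hm (Fin.ext h.symm)
    simp [levelLaw, levelWeight, this]
  · simp

lemma sum_mul_prodWeight {w : Fin n → ℝ} (hw : ∀ i, 0 < w i) (g : ℕ → ℝ) :
    ∑ x, g (cnt x) * prodWeight w x = ∑ m ∈ range (n + 1), g m * levelMass w m := by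
  have hlaw : ∀ m : Fin (n + 1), ∑ x, levelLaw w m x = 1 := fun m => by
    simp only [levelLaw]
    rw [← sum_div]
    exact div_self (levelMass_pos hw (Nat.lt_succ_iff.1 m.2)).ne'
  simp_rw [← sum_levelLaw_mul hw g]
  rw [sum_comm, ← Fin.sum_univ_eq_sum_range (fun m => g m * levelMass w m)]
  simp_rw [← mul_sum, hlaw, mul_one]

/-- The law of `cnt x` when `x` has law proportional to `β ^ cnt x * prodWeight w x`,
conditioned on `k ≤ cnt x`. -/
def countLaw (w : Fin n → ℝ) (k : ℕ) (β : ℝ) (m : ℕ) : ℝ :=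
  (if k ≤ m then β ^ m else 0) * levelMass w m /
    ∑ l ∈ range (n + 1), (if k ≤ l then β ^ l else 0) * levelMass w l

lemma ite_pow_mul_levelMass_nonneg {w : Fin n → ℝ} (hw : ∀ i, 0 < w i) (k : ℕ) {β : ℝ}
    (hβ : 0 ≤ β) (m : ℕ) : 0 ≤ (if k ≤ m then β ^ m else 0) * levelMass w m :=
  mul_nonneg (by split <;> positivity) (levelMass_nonneg hw m)

lemma countLaw_nonneg {w : Fin n → ℝ} (hw : ∀ i, 0 < w i) (k : ℕ) {β : ℝ} (hβ : 0 ≤ β)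
    (m : ℕ) : 0 ≤ countLaw w k β m :=
  div_nonneg (ite_pow_mul_levelMass_nonneg hw k hβ m)
    (sum_nonneg fun l _ => ite_pow_mul_levelMass_nonneg hw k hβ l)

lemma sum_countLaw {w : Fin n → ℝ} (hw : ∀ i, 0 < w i) {k : ℕ} (hk : k ≤ n) {β : ℝ}
    (hβ : 0 < β) : ∑ m ∈ range (n + 1), countLaw w k β m = 1 := by
  have hZ : 0 < ∑ l ∈ range (n + 1), (if k ≤ l then β ^ l else 0) * levelMass w l := by
    refine lt_of_lt_of_le ?_ (single_le_sum (fun l _ => ite_pow_mul_levelMass_nonneg hw k hβ.le l)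
      (mem_range.2 (Nat.lt_succ_of_le hk)))
    rw [if_pos le_rfl]
    exact mul_pos (pow_pos hβ k) (levelMass_pos hw hk)
  simp only [countLaw]
  rw [← sum_div]
  exact div_self hZ.ne'

lemma stochLE_countLaw {w : Fin n → ℝ} (hw : ∀ i, 0 < w i) {k : ℕ} (hk : k ≤ n) {β : ℝ}
    (hβ₀ : 0 < β) (hβ₁ : β ≤ 1) :
    StochLE (fun m : Fin (n + 1) => countLaw w k β m) (fun m => countLaw w k 1 m) := by
  have ha := countLaw_nonneg hw k hβ₀.le
  have hb := countLaw_nonneg hw k zero_le_one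
  have htot : ∑ m ∈ range (n + 1), countLaw w k β m = ∑ m ∈ range (n + 1), countLaw w k 1 m := by
    rw [sum_countLaw hw hk hβ₀, sum_countLaw hw hk one_pos]
  refine stochLE_of_sum_range_le ha hb htot fun t ht => sum_range_le_of_mul_le ha hb htot ?_ ht
  intro m l hml
  simp only [countLaw, div_mul_div_comm]
  refine div_le_div_of_nonneg_right ?_ (mul_nonneg
    (sum_nonneg fun i _ => ite_pow_mul_levelMass_nonneg hw k hβ₀.le i)
    (sum_nonneg fun i _ => ite_pow_mul_levelMass_nonneg hw k zero_le_one i))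
  · by_cases hkm : k ≤ m
    · simp only [if_pos hkm, if_pos (hkm.trans hml), one_pow, one_mul]
      have := mul_nonneg (levelMass_nonneg hw l) (levelMass_nonneg hw m)
      have := pow_le_pow_of_le_one hβ₀.le hβ₁ hml
      nlinarith
    · simp [hkm]

end Mixture

section Bernoulli

variable {n : ℕ}

lemma bw_eq_mul_prodWeight {p : Fin n → ℝ} (hp : ∀ i, p i < 1) (x : Fin n → Bool) :
    bw p x = (∏ i, (1 - p i)) * prodWeight (fun i => p i / (1 - p i)) x := by
  rw [bw, prodWeight, ← prod_mul_distrib]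
  refine prod_congr rfl fun i _ => ?_
  have := (sub_pos.2 (hp i)).ne'
  split <;> field_simp

lemma prodWeight_const_mul (β : ℝ) (w : Fin n → ℝ) (x : Fin n → Bool) :
    prodWeight (fun i => β * w i) x = β ^ cnt x * prodWeight w x := by
  rw [prodWeight, prodWeight, cnt, ← prod_pow_eq_pow_sum, ← prod_mul_distrib]
  refine prod_congr rfl fun i _ => ?_
  split <;> simp

lemma condPMF_eq_div_sum {p : Fin n → ℝ} {A : (Fin n → Bool) → Prop} {C : ℝ} (hC : C ≠ 0)
    {f : (Fin n → Bool) → ℝ} (h : ∀ x, (if A x then bw p x else 0) = C * f x)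
    (x : Fin n → Bool) : condPMF p A x = f x / ∑ y, f y := by
  rw [condPMF, bpr, h]
  simp_rw [h]
  rw [← mul_sum, mul_div_mul_left _ _ hC]

lemma condPMF_eq_sum_countLaw {p w : Fin n → ℝ} {β : ℝ} (hw : ∀ i, 0 < w i)
    (hp : ∀ i, p i < 1) (hodds : ∀ i, p i / (1 - p i) = β * w i) (k : ℕ) (x : Fin n → Bool) :
    condPMF p (fun x => k ≤ cnt x) x = ∑ m : Fin (n + 1), countLaw w k β m * levelLaw w m x := by
  set g : ℕ → ℝ := fun m => if k ≤ m then β ^ m else 0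
  have hC : (∏ i, (1 - p i)) ≠ 0 := (prod_pos fun i _ => sub_pos.2 (hp i)).ne'
  rw [condPMF_eq_div_sum hC (f := fun y => g (cnt y) * prodWeight w y) fun y => by
      rw [bw_eq_mul_prodWeight hp, funext hodds, prodWeight_const_mul]
      split_ifs <;> simp [g, *],
    sum_mul_prodWeight hw, ← sum_levelLaw_mul hw g x, sum_div]
  refine sum_congr rfl fun m _ => ?_
  rw [countLaw]
  ring

lemma exists_odds_eq_mul {p q : Fin n → ℝ} (hpq : ∀ i, 0 < p i ∧ p i ≤ q i ∧ q i < 1)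
    (hβ : ∀ i j : Fin n,
      p i / (1 - p i) * ((1 - q i) / q i) = p j / (1 - p j) * ((1 - q j) / q j)) :
    ∃ β : ℝ, 0 < β ∧ β ≤ 1 ∧ ∀ i, p i / (1 - p i) = β * (q i / (1 - q i)) := by
  rcases isEmpty_or_nonempty (Fin n) with hn | ⟨⟨i₀⟩⟩
  · exact ⟨1, one_pos, le_rfl, isEmptyElim⟩
  obtain ⟨hp, hpq₀, hq⟩ := hpq i₀
  have hq₀ : 0 < q i₀ := hp.trans_le hpq₀
  refine ⟨p i₀ / (1 - p i₀) * ((1 - q i₀) / q i₀),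
    mul_pos (div_pos hp (by linarith)) (div_pos (by linarith) hq₀), ?_, fun i => ?_⟩
  · rw [div_mul_div_comm, div_le_one (mul_pos (by linarith) hq₀)]
    nlinarith
  · obtain ⟨hpi, hpqi, hqi⟩ := hpq i
    have : q i ≠ 0 := (hpi.trans_le hpqi).ne'
    have : 1 - q i ≠ 0 := by linarith
    rw [← hβ i i₀]
    field_simp

end Bernoulli

/-- if all `β i = (p i/(1-p i))·((1-q i)/q i)` are equal, then for every
`k ≤ n` the conditional law of `X` given `∑ X_i ≥ k` is stochastically dominated by
the conditional law of `Y` given `∑ Y_i ≥ k`. -/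
theorem stmt4 {n : ℕ} (p q : Fin n → ℝ)
    (hpq : ∀ i, 0 < p i ∧ p i ≤ q i ∧ q i < 1)
    (hβ : ∀ i j : Fin n,
      p i / (1 - p i) * ((1 - q i) / q i) = p j / (1 - p j) * ((1 - q j) / q j))
    (k : ℕ) (hk : k ≤ n) :
    dominates (condPMF p (fun x => k ≤ cnt x)) (condPMF q (fun x => k ≤ cnt x)) := by
  obtain ⟨β, hβ₀, hβ₁, hodds⟩ := exists_odds_eq_mul hpq hβ
  have hq : ∀ i, q i < 1 := fun i => (hpq i).2.2
  have hp : ∀ i, p i < 1 := fun i => (hpq i).2.1.trans_lt (hq i)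
  have hw : ∀ i, 0 < q i / (1 - q i) := fun i =>
    div_pos ((hpq i).1.trans_le (hpq i).2.1) (sub_pos.2 (hq i))
  have hmix := StochLE.mixture (stochLE_countLaw hw hk hβ₀ hβ₁) fun i j hij =>
    stochLE_levelLaw hw hij (Nat.lt_succ_iff.1 j.2)
  rw [← funext (condPMF_eq_sum_countLaw hw hp hodds k),
    ← funext (condPMF_eq_sum_countLaw hw hq (fun i => (one_mul _).symm) k)] at hmix
  exact hmix.dominates
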